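/- arXiv:math/9805094 — 6 statements merged into one kernel-verified Lean document; each statement's English description precedes it below -/
import Mathlib

section
/- Let (A, ∧, δ, Δ, [·•·]) be a dGBV algebra and let a ∈ A₀ be an even element satisfying δa + (1/2)[a•a] = 0 and Δa = 0. Then (A, ∧, δ_a, Δ, [·•·]) is again a dGBV algebra, where δ_a := δ + [a•·]; in particular δ_a² = 0, δ_a Δ + Δ δ_a = 0, and δ_a is an odd derivation of the product: δ_a(b ∧ c) = (δ_a b) ∧ c + (−1)^{|b|} b ∧ (δ_a c) for all homogeneous b, c, while the bracket generated by Δ is unchanged. -/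
/-- The bracket generated by the odd operator `Δ` on a `ℤ₂`-graded algebra:
for `a` homogeneous of degree `i`,
`[a • b] = (−1)^{|a|} (Δ(a ∧ b) − (Δa) ∧ b − (−1)^{|a|} a ∧ Δb)`. -/
noncomputable def dgbvBracket {k A : Type*} [Field k] [Ring A] [Algebra k A]
    (Δ : A →ₗ[k] A) (i : ZMod 2) (a b : A) : A :=
  ((-1 : k) ^ i.val) • (Δ (a * b) - Δ a * b - ((-1 : k) ^ i.val) • (a * Δ b))

/-- A differential Gerstenhaber–Batalin–Vilkovisky (dGBV) algebra over a field `k`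
of characteristic zero: a `ℤ₂`-graded supercommutative associative unital `k`-algebra
`A` together with odd operators `δ`, `Δ` such that `δ² = Δ² = 0`, `δΔ + Δδ = 0`,
`δ` is an odd derivation of the product, and the bracket generated by `Δ` satisfies
the odd Poisson (Leibniz) identity. -/
structure DGBV (k : Type*) [Field k] [CharZero k] (A : Type*) [Ring A] [Algebra k A] where
  grading : ZMod 2 → Submodule k A
  gradedAlgebra : GradedAlgebra grading
  supercomm : ∀ (i j : ZMod 2), ∀ a ∈ grading i, ∀ b ∈ grading j,
    a * b = ((-1 : k) ^ (i.val * j.val)) • (b * a)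
  δ : A →ₗ[k] A
  Δ : A →ₗ[k] A
  δ_odd : ∀ (i : ZMod 2), ∀ a ∈ grading i, δ a ∈ grading (i + 1)
  Δ_odd : ∀ (i : ZMod 2), ∀ a ∈ grading i, Δ a ∈ grading (i + 1)
  δ_sq : ∀ a : A, δ (δ a) = 0
  Δ_sq : ∀ a : A, Δ (Δ a) = 0
  δΔ_anticomm : ∀ a : A, δ (Δ a) + Δ (δ a) = 0
  δ_derivation : ∀ (i : ZMod 2), ∀ a ∈ grading i, ∀ (j : ZMod 2), ∀ b ∈ grading j,
    δ (a * b) = δ a * b + ((-1 : k) ^ i.val) • (a * δ b)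
  bracket_derivation : ∀ (i j : ZMod 2), ∀ a ∈ grading i, ∀ b ∈ grading j,
    ∀ (l : ZMod 2), ∀ c ∈ grading l,
    dgbvBracket Δ i a (b * c) =
      dgbvBracket Δ i a b * c + ((-1 : k) ^ ((i + 1).val * j.val)) • (b * dgbvBracket Δ i a c)

/-!
The deformed differential `δ_a = δ + [a • ·]` inherits oddness and the Leibniz rule from `δ`
and `[a • ·]`, and anticommutes with `Δ` because `Δ a = 0`. For the square, the Leibniz rule
for `δ` gives `δ [a • b] + [a • δ b] = [δ a • b]`, and the Leibniz rule for `[a • ·]` applied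
to `a * b` and `a * Δ b` gives the Jacobi identity `[[a • a] • b] = 2 [a • [a • b]]`; hence
`δ_a² b = [δ a + ½ [a • a] • b]`, which vanishes by the Maurer–Cartan equation. Identities
known on homogeneous elements are extended to all of `A` by linearity.
-/

namespace DGBV

variable {k A : Type*} [Field k] [Ring A] [Algebra k A]

noncomputable def bracketLeft (Δ : A →ₗ[k] A) (i : ZMod 2) (a : A) : A →ₗ[k] A :=
  ((-1 : k) ^ i.val) •
    (Δ ∘ₗ LinearMap.mulLeft k a - LinearMap.mulLeft k (Δ a) -
      ((-1 : k) ^ i.val) • (LinearMap.mulLeft k a ∘ₗ Δ))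

@[simp]
theorem bracketLeft_apply (Δ : A →ₗ[k] A) (i : ZMod 2) (a b : A) :
    bracketLeft Δ i a b = dgbvBracket Δ i a b :=
  rfl

theorem dgbvBracket_add_left (Δ : A →ₗ[k] A) (i : ZMod 2) (a a' b : A) :
    dgbvBracket Δ i (a + a') b = dgbvBracket Δ i a b + dgbvBracket Δ i a' b := by
  simp only [dgbvBracket, add_mul, map_add]
  module

theorem dgbvBracket_smul_left (Δ : A →ₗ[k] A) (i : ZMod 2) (c : k) (a b : A) :
    dgbvBracket Δ i (c • a) b = c • dgbvBracket Δ i a b := by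
  simp only [dgbvBracket, smul_mul_assoc, map_smul]
  module

theorem dgbvBracket_zero_left (Δ : A →ₗ[k] A) (i : ZMod 2) (b : A) :
    dgbvBracket Δ i 0 b = 0 := by
  simp [dgbvBracket]

theorem dgbvBracket_zero_of_map_eq_zero {Δ : A →ₗ[k] A} {a : A} (hΔa : Δ a = 0) (b : A) :
    dgbvBracket Δ 0 a b = Δ (a * b) - a * Δ b := by
  simp [dgbvBracket, hΔa]

variable [CharZero k] (D : DGBV k A)

theorem linearMap_ext {M : Type*} [AddCommGroup M] [Module k M] {f g : A →ₗ[k] M}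
    (h : ∀ i, ∀ x ∈ D.grading i, f x = g x) : f = g := by
  let _ := D.gradedAlgebra
  ext x
  induction x using DirectSum.Decomposition.inductionOn D.grading with
  | zero => simp
  | homogeneous x => exact h _ x x.2
  | add x y hx hy => simp only [map_add, hx, hy]

theorem dgbvBracket_mem {i j : ZMod 2} {a b : A} (ha : a ∈ D.grading i) (hb : b ∈ D.grading j) :
    dgbvBracket D.Δ i a b ∈ D.grading (i + j + 1) := by
  let _ := D.gradedAlgebra
  have hab : D.Δ (a * b) ∈ D.grading (i + j + 1) :=
    D.Δ_odd _ _ (SetLike.mul_mem_graded ha hb)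
  have hΔab : D.Δ a * b ∈ D.grading (i + j + 1) := by
    rw [add_right_comm]; exact SetLike.mul_mem_graded (D.Δ_odd i a ha) hb
  have haΔb : a * D.Δ b ∈ D.grading (i + j + 1) := by
    rw [add_assoc]; exact SetLike.mul_mem_graded ha (D.Δ_odd j b hb)
  exact Submodule.smul_mem _ _ <|
    Submodule.sub_mem _ (Submodule.sub_mem _ hab hΔab) (Submodule.smul_mem _ _ haΔb)

variable {D}

theorem δ_mul_of_mem {i : ZMod 2} {a : A} (ha : a ∈ D.grading i) (x : A) :
    D.δ (a * x) = D.δ a * x + ((-1 : k) ^ i.val) • (a * D.δ x) := by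
  have h := D.linearMap_ext (f := D.δ ∘ₗ LinearMap.mulLeft k a)
    (g := LinearMap.mulLeft k (D.δ a) + ((-1 : k) ^ i.val) • LinearMap.mulLeft k a ∘ₗ D.δ)
    fun j y hy => by simpa using D.δ_derivation i a ha j y hy
  exact LinearMap.congr_fun h x

theorem dgbvBracket_mul_of_mem {i j : ZMod 2} {a b : A} (ha : a ∈ D.grading i)
    (hb : b ∈ D.grading j) (x : A) :
    dgbvBracket D.Δ i a (b * x) =
      dgbvBracket D.Δ i a b * x +
        ((-1 : k) ^ ((i + 1).val * j.val)) • (b * dgbvBracket D.Δ i a x) := by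
  have h := D.linearMap_ext (f := bracketLeft D.Δ i a ∘ₗ LinearMap.mulLeft k b)
    (g := LinearMap.mulLeft k (dgbvBracket D.Δ i a b) +
      ((-1 : k) ^ ((i + 1).val * j.val)) • LinearMap.mulLeft k b ∘ₗ bracketLeft D.Δ i a)
    fun l y hy => by simpa using D.bracket_derivation i j a ha b hb l y hy
  exact LinearMap.congr_fun h x

variable {a : A}

theorem δ_dgbvBracket_add_dgbvBracket_δ (ha : a ∈ D.grading 0) (b : A) :
    D.δ (dgbvBracket D.Δ 0 a b) + dgbvBracket D.Δ 0 a (D.δ b) = dgbvBracket D.Δ 1 (D.δ a) b := by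
  have hδΔ : ∀ x, D.δ (D.Δ x) = -D.Δ (D.δ x) := fun x =>
    eq_neg_of_add_eq_zero_left (D.δΔ_anticomm x)
  simp only [dgbvBracket, ZMod.val_zero, ZMod.val_one, pow_zero, pow_one, one_smul, map_sub,
    hδΔ, δ_mul_of_mem ha, δ_mul_of_mem (D.Δ_odd 0 a ha), zero_add, map_add, mul_neg, neg_mul]
  module

theorem Δ_dgbvBracket_add_dgbvBracket_Δ (hΔa : D.Δ a = 0) (b : A) :
    D.Δ (dgbvBracket D.Δ 0 a b) + dgbvBracket D.Δ 0 a (D.Δ b) = 0 := by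
  simp [dgbvBracket_zero_of_map_eq_zero hΔa, D.Δ_sq]

theorem dgbvBracket_dgbvBracket_self (ha : a ∈ D.grading 0) (hΔa : D.Δ a = 0) (b : A) :
    dgbvBracket D.Δ 1 (dgbvBracket D.Δ 0 a a) b =
      (2 : k) • dgbvBracket D.Δ 0 a (dgbvBracket D.Δ 0 a b) := by
  have h := dgbvBracket_mul_of_mem ha ha b
  have h' := dgbvBracket_mul_of_mem ha ha (D.Δ b)
  simp only [dgbvBracket_zero_of_map_eq_zero hΔa, hΔa, D.Δ_sq, mul_zero, sub_zero, zero_add,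
    ZMod.val_zero, pow_zero, one_smul, mul_sub] at h h' ⊢
  have hΔ := congrArg D.Δ h
  simp only [map_sub, map_add, D.Δ_sq] at hΔ
  simp only [dgbvBracket, ZMod.val_one, pow_one, map_sub, D.Δ_sq, zero_mul, zero_sub, mul_neg]
  linear_combination (norm := module) hΔ + h'

variable (D a) in
noncomputable def deformedδ : A →ₗ[k] A :=
  D.δ + bracketLeft D.Δ 0 a

theorem deformedδ_apply (b : A) : D.deformedδ a b = D.δ b + dgbvBracket D.Δ 0 a b :=
  rfl

theorem deformedδ_mem (ha : a ∈ D.grading 0) {i : ZMod 2} {b : A} (hb : b ∈ D.grading i) :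
    D.deformedδ a b ∈ D.grading (i + 1) := by
  have hbr := D.dgbvBracket_mem ha hb
  rw [zero_add] at hbr
  exact Submodule.add_mem _ (D.δ_odd i b hb) hbr

theorem deformedδ_Δ_add_Δ_deformedδ (hΔa : D.Δ a = 0) (b : A) :
    D.deformedδ a (D.Δ b) + D.Δ (D.deformedδ a b) = 0 := by
  have h := Δ_dgbvBracket_add_dgbvBracket_Δ hΔa b
  rw [deformedδ_apply, deformedδ_apply, map_add]
  linear_combination (norm := abel) D.δΔ_anticomm b + h

theorem deformedδ_mul (ha : a ∈ D.grading 0) {j : ZMod 2} {b : A} (hb : b ∈ D.grading j)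
    {l : ZMod 2} {c : A} (hc : c ∈ D.grading l) :
    D.deformedδ a (b * c) =
      D.deformedδ a b * c + ((-1 : k) ^ j.val) • (b * D.deformedδ a c) := by
  have hbr := D.bracket_derivation 0 j a ha b hb l c hc
  rw [zero_add, ZMod.val_one, one_mul] at hbr
  simp only [deformedδ_apply, D.δ_derivation j b hb l c hc, hbr, add_mul, mul_add, smul_add]
  abel

theorem deformedδ_deformedδ (ha : a ∈ D.grading 0)
    (hMC : D.δ a + (1 / 2 : k) • dgbvBracket D.Δ 0 a a = 0) (hΔa : D.Δ a = 0) (b : A) :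
    D.deformedδ a (D.deformedδ a b) = 0 :=
  calc D.deformedδ a (D.deformedδ a b)
      = dgbvBracket D.Δ 1 (D.δ a) b + dgbvBracket D.Δ 0 a (dgbvBracket D.Δ 0 a b) := by
        rw [← δ_dgbvBracket_add_dgbvBracket_δ ha, deformedδ, LinearMap.add_apply,
          LinearMap.add_apply, map_add, map_add, D.δ_sq]
        simp only [bracketLeft_apply]
        abel
    _ = dgbvBracket D.Δ 1 (D.δ a + (1 / 2 : k) • dgbvBracket D.Δ 0 a a) b := by
        rw [dgbvBracket_add_left, dgbvBracket_smul_left, dgbvBracket_dgbvBracket_self ha hΔa,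
          smul_smul]
        norm_num
    _ = 0 := by rw [hMC, dgbvBracket_zero_left]

variable (D) in
noncomputable def deform (ha : a ∈ D.grading 0)
    (hMC : D.δ a + (1 / 2 : k) • dgbvBracket D.Δ 0 a a = 0) (hΔa : D.Δ a = 0) : DGBV k A where
  grading := D.grading
  gradedAlgebra := D.gradedAlgebra
  supercomm := D.supercomm
  δ := D.deformedδ a
  Δ := D.Δ
  δ_odd _ _ := deformedδ_mem ha
  Δ_odd := D.Δ_odd
  δ_sq := deformedδ_deformedδ ha hMC hΔa
  Δ_sq := D.Δ_sq
  δΔ_anticomm := deformedδ_Δ_add_Δ_deformedδ hΔa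
  δ_derivation _ _ hb _ _ hc := deformedδ_mul ha hb hc
  bracket_derivation := D.bracket_derivation

end DGBV

/-- If `a` is an even element of a dGBV algebra satisfying `δa + (1/2)[a•a] = 0` and
`Δa = 0`, then `(A, ∧, δ_a, Δ, [·•·])`, with `δ_a = δ + [a•·]`, is again a dGBV algebra;
in particular `δ_a² = 0`, `δ_a Δ + Δ δ_a = 0`, and `δ_a` is an odd derivation of the
product, while the bracket generated by `Δ` is unchanged. -/
theorem dgbv_deformed_is_dgbv {k A : Type*} [Field k] [CharZero k] [Ring A] [Algebra k A]
    (D : DGBV k A) (a : A) (ha : a ∈ D.grading 0)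
    (hMC : D.δ a + (1 / 2 : k) • dgbvBracket D.Δ 0 a a = 0) (hΔa : D.Δ a = 0) :
    ∃ D' : DGBV k A, D'.grading = D.grading ∧ D'.Δ = D.Δ ∧
      (∀ b : A, D'.δ b = D.δ b + dgbvBracket D.Δ 0 a b) ∧
      (∀ (i : ZMod 2) (b c : A), dgbvBracket D'.Δ i b c = dgbvBracket D.Δ i b c) ∧
      (∀ b : A, D'.δ (D'.δ b) = 0) ∧
      (∀ b : A, D'.δ (D.Δ b) + D.Δ (D'.δ b) = 0) ∧
      (∀ (j : ZMod 2), ∀ b ∈ D.grading j, ∀ (l : ZMod 2), ∀ c ∈ D.grading l,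
        D'.δ (b * c) = D'.δ b * c + ((-1 : k) ^ j.val) • (b * D'.δ c)) := by
  let D' := D.deform ha hMC hΔa
  exact ⟨D', rfl, rfl, fun _ => rfl, fun _ _ _ => rfl, D'.δ_sq, D'.δΔ_anticomm,
    D'.δ_derivation⟩
end

section
/- Let (A, ∧, δ, Δ, [·•·]) be a dGBV algebra with an integral ∫, and let a ∈ A₀ be an even element satisfying δa + (1/2)[a•a] = 0 and Δa = 0. Then ∫ is also an integral for the deformed dGBV algebra (A, ∧, δ_a, Δ, [·•·]); in particular, for all homogeneous b, c ∈ A one has ∫ (δ_a b) ∧ c = (−1)^{|b|+1} ∫ b ∧ (δ_a c), where δ_a := δ + [a•·]. -/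
theorem ZMod.neg_one_pow_val_add_one {k : Type*} [Ring k] (j : ZMod 2) :
    (-1 : k) ^ (j + 1).val = -(-1 : k) ^ j.val := by
  rw [ZMod.val_add, ← neg_one_pow_eq_pow_mod_two, ZMod.val_one, pow_succ, mul_neg_one]

theorem dgbvBracket_zero_eq_of_Δ_eq_zero {k A : Type*} [Field k] [Ring A] [Algebra k A]
    (Δ : A →ₗ[k] A) {a : A} (hΔa : Δ a = 0) (x : A) :
    dgbvBracket Δ 0 a x = Δ (a * x) - a * Δ x := by
  simp [dgbvBracket, hΔa]

namespace DGBV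

variable {k A : Type*} [Field k] [CharZero k] [Ring A] [Algebra k A] (D : DGBV k A)

theorem mul_mem {i j : ZMod 2} {a b : A} (ha : a ∈ D.grading i) (hb : b ∈ D.grading j) :
    a * b ∈ D.grading (i + j) :=
  D.gradedAlgebra.mul_mem ha hb

theorem mul_comm_of_mem_zero {j : ZMod 2} {a b : A} (ha : a ∈ D.grading 0)
    (hb : b ∈ D.grading j) : a * b = b * a := by
  simpa using D.supercomm 0 j a ha b hb

/- With `Δ a = 0` the bracket `[a • x] = Δ(a x) - a Δx` is a commutator with `Δ`; since `Δ` is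
graded self-adjoint for `f` and the even `a` commutes with everything, `[a • ·]` is graded
skew-adjoint. -/
theorem integral_bracket_mul (f : A →ₗ[k] k)
    (hΔInt : ∀ (i : ZMod 2), ∀ a ∈ D.grading i, ∀ (j : ZMod 2), ∀ b ∈ D.grading j,
      f (D.Δ a * b) = (-1 : k) ^ i.val * f (a * D.Δ b))
    {a : A} (ha : a ∈ D.grading 0) (hΔa : D.Δ a = 0)
    {j l : ZMod 2} {b c : A} (hb : b ∈ D.grading j) (hc : c ∈ D.grading l) :
    f (dgbvBracket D.Δ 0 a b * c) = (-1 : k) ^ (j + 1).val * f (b * dgbvBracket D.Δ 0 a c) := by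
  have hab : a * b ∈ D.grading j := zero_add j ▸ D.mul_mem ha hb
  have hac : a * c ∈ D.grading l := zero_add l ▸ D.mul_mem ha hc
  have h_left : a * D.Δ b * c = D.Δ b * (a * c) := by
    rw [D.mul_comm_of_mem_zero ha (D.Δ_odd j b hb), mul_assoc]
  have h_right : b * (a * D.Δ c) = a * b * D.Δ c := by
    rw [← mul_assoc, D.mul_comm_of_mem_zero ha hb]
  rw [dgbvBracket_zero_eq_of_Δ_eq_zero _ hΔa, dgbvBracket_zero_eq_of_Δ_eq_zero _ hΔa, sub_mul,
    mul_sub, h_left, h_right, map_sub, map_sub, hΔInt j _ hab l c hc, hΔInt j b hb l _ hac,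
    ZMod.neg_one_pow_val_add_one]
  ring

end DGBV

theorem dgbv_integral_for_deformed_general {k A : Type*} [Field k] [CharZero k] [Ring A] [Algebra k A]
    (D : DGBV k A) (f : A →ₗ[k] k)
    (hδInt : ∀ (i : ZMod 2), ∀ a ∈ D.grading i, ∀ (j : ZMod 2), ∀ b ∈ D.grading j,
      f (D.δ a * b) = (-1 : k) ^ (i + 1).val * f (a * D.δ b))
    (hΔInt : ∀ (i : ZMod 2), ∀ a ∈ D.grading i, ∀ (j : ZMod 2), ∀ b ∈ D.grading j,
      f (D.Δ a * b) = (-1 : k) ^ i.val * f (a * D.Δ b))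
    (a : A) (ha : a ∈ D.grading 0) (hΔa : D.Δ a = 0) :
    ∀ (j : ZMod 2), ∀ b ∈ D.grading j, ∀ (l : ZMod 2), ∀ c ∈ D.grading l,
      f ((D.δ b + dgbvBracket D.Δ 0 a b) * c) =
        (-1 : k) ^ (j + 1).val * f (b * (D.δ c + dgbvBracket D.Δ 0 a c)) := by
  intro j b hb l c hc
  rw [add_mul, mul_add, map_add, map_add, hδInt j b hb l c hc,
    D.integral_bracket_mul f hΔInt ha hΔa hb hc, mul_add]

/-- If `∫` is an integral on a dGBV algebra and `a` is an even element satisfying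
`δa + (1/2)[a•a] = 0` and `Δa = 0`, then `∫` is also an integral for the deformed dGBV
algebra with differential `δ_a = δ + [a•·]`; in particular
`∫ (δ_a b) ∧ c = (−1)^{|b|+1} ∫ b ∧ (δ_a c)` for homogeneous `b, c`. -/
theorem dgbv_integral_for_deformed {k A : Type*} [Field k] [CharZero k] [Ring A] [Algebra k A]
    (D : DGBV k A) (f : A →ₗ[k] k)
    (hEven : ∀ a ∈ D.grading 1, f a = 0)
    (hδInt : ∀ (i : ZMod 2), ∀ a ∈ D.grading i, ∀ (j : ZMod 2), ∀ b ∈ D.grading j,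
      f (D.δ a * b) = (-1 : k) ^ (i + 1).val * f (a * D.δ b))
    (hΔInt : ∀ (i : ZMod 2), ∀ a ∈ D.grading i, ∀ (j : ZMod 2), ∀ b ∈ D.grading j,
      f (D.Δ a * b) = (-1 : k) ^ i.val * f (a * D.Δ b))
    (a : A) (ha : a ∈ D.grading 0)
    (hMC : D.δ a + (1 / 2 : k) • dgbvBracket D.Δ 0 a a = 0) (hΔa : D.Δ a = 0) :
    ∀ (j : ZMod 2), ∀ b ∈ D.grading j, ∀ (l : ZMod 2), ∀ c ∈ D.grading l,
      f ((D.δ b + dgbvBracket D.Δ 0 a b) * c) =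
        (-1 : k) ^ (j + 1).val * f (b * (D.δ c + dgbvBracket D.Δ 0 a c)) :=
  dgbv_integral_for_deformed_general D f hδInt hΔInt a ha hΔa
end

section
/- With notation as in the abstract Kähler–Hodge setting, the inclusion of complexes (ker ∂†, ∂̄) ↪ (V, ∂̄) induces a surjection on cohomology: for every x ∈ V with ∂̄x = 0 there exists x' ∈ V with ∂̄x' = 0, ∂†x' = 0, and x − x' ∈ range ∂̄ (indeed x' may be taken Δ-harmonic: Δx' = 0). -/
open scoped InnerProductSpace

private lemma harm_aux {V : Type*} [NormedAddCommGroup V] [InnerProductSpace ℂ V]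
    (D Dd : V →ₗ[ℂ] V) (hadj : ∀ x y : V, ⟪D x, y⟫_ℂ = ⟪x, Dd y⟫_ℂ)
    (h : V) (hh : D (Dd h) + Dd (D h) = 0) : D h = 0 ∧ Dd h = 0 := by
  have h0 : (0 : ℂ) = ⟪D (Dd h) + Dd (D h), h⟫_ℂ := by rw [hh]; simp
  rw [inner_add_left] at h0
  have h1 : ⟪D (Dd h), h⟫_ℂ = ⟪Dd h, Dd h⟫_ℂ := hadj _ _
  have h2 : ⟪Dd (D h), h⟫_ℂ = starRingEnd ℂ ⟪D h, D h⟫_ℂ := by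
    rw [← inner_conj_symm, ← hadj]
  rw [h1, h2, inner_self_eq_norm_sq_to_K, inner_self_eq_norm_sq_to_K] at h0
  have h3 : (0 : ℂ) = ((‖Dd h‖ ^ 2 + ‖D h‖ ^ 2 : ℝ) : ℂ) := by
    rw [h0]; simp only [map_pow, RCLike.conj_ofReal]; norm_cast
  have h4 : ‖Dd h‖ ^ 2 + ‖D h‖ ^ 2 = 0 := by exact_mod_cast h3.symm
  have h5 : ‖D h‖ = 0 ∧ ‖Dd h‖ = 0 := by
    constructor <;> nlinarith [sq_nonneg ‖D h‖, sq_nonneg ‖Dd h‖, norm_nonneg (D h),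
      norm_nonneg (Dd h)]
  exact ⟨norm_eq_zero.mp h5.1, norm_eq_zero.mp h5.2⟩

/-- Abstract Kähler–Hodge setting: the inclusion `(ker ∂†, ∂̄) ↪ (V, ∂̄)` induces a
surjection on cohomology: every `∂̄`-closed `x` is `∂̄`-cohomologous to some `x'` with
`∂̄x' = 0` and `∂†x' = 0`; indeed `x'` may be taken `Δ`-harmonic. -/
theorem kahler_hodge_inclusion_surjective_dbar {V : Type*} [NormedAddCommGroup V]
    [InnerProductSpace ℂ V] (pd pbar pdDag pbarDag : V →ₗ[ℂ] V)
    (hpd_adj : ∀ x y : V, ⟪pd x, y⟫_ℂ = ⟪x, pdDag y⟫_ℂ)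
    (hpbar_adj : ∀ x y : V, ⟪pbar x, y⟫_ℂ = ⟪x, pbarDag y⟫_ℂ)
    (hpd2 : ∀ x : V, pd (pd x) = 0)
    (hpbar2 : ∀ x : V, pbar (pbar x) = 0)
    (hanticomm : ∀ x : V, pd (pbar x) + pbar (pd x) = 0)
    (hLaplacians : ∀ x : V,
      pbar (pbarDag x) + pbarDag (pbar x) = pd (pdDag x) + pdDag (pd x))
    (hHodge : ∀ x : V, ∃ h y : V,
      x = h + (pbar (pbarDag y) + pbarDag (pbar y)) ∧
      pbar (pbarDag h) + pbarDag (pbar h) = 0) :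
    ∀ x : V, pbar x = 0 →
      ∃ x' : V, pbar x' = 0 ∧ pdDag x' = 0 ∧ (∃ u : V, x - x' = pbar u) ∧
        pbar (pbarDag x') + pbarDag (pbar x') = 0 := by
  intro x hx
  obtain ⟨h, y, hxy, hharm⟩ := hHodge x
  obtain ⟨hbar, hbarDag⟩ := harm_aux pbar pbarDag hpbar_adj h hharm
  have hharm' : pd (pdDag h) + pdDag (pd h) = 0 := by rw [← hLaplacians]; exact hharm
  obtain ⟨hd, hdDag⟩ := harm_aux pd pdDag hpd_adj h hharm'
  -- show pbarDag (pbar y) = 0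
  have key : pbar (pbarDag (pbar y)) = 0 := by
    have := congrArg pbar hxy
    simp only [map_add, hx, hbar, hpbar2, zero_add] at this
    exact this.symm
  have key2 : pbarDag (pbar y) = 0 := by
    have : ⟪pbarDag (pbar y), pbarDag (pbar y)⟫_ℂ = 0 := by
      rw [← hpbar_adj, key, inner_zero_left]
    exact inner_self_eq_zero.mp this
  refine ⟨h, hbar, hdDag, ⟨pbarDag y, ?_⟩, hharm⟩
  rw [hxy, key2]; abel
end

section
/- With notation as in the abstract Kähler–Hodge setting, the inclusion of complexes (ker ∂†, ∂̄) ↪ (V, ∂̄) induces an injection on cohomology: if α ∈ V satisfies ∂†α = 0 and α = ∂̄β for some β ∈ V, then there exists β' ∈ V with ∂†β' = 0 and α = ∂̄β'. -/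
open scoped InnerProductSpace

/-- If a sum of two self inner products vanishes, both vectors vanish. -/
lemma kh_inner_self_add_eq_zero {V : Type*} [NormedAddCommGroup V]
    [InnerProductSpace ℂ V] {u v : V}
    (h : ⟪u, u⟫_ℂ + ⟪v, v⟫_ℂ = 0) : u = 0 ∧ v = 0 := by
  have hre := congrArg Complex.re h
  simp only [Complex.add_re, Complex.zero_re] at hre
  have hu : RCLike.re ⟪u, u⟫_ℂ = ‖u‖ ^ 2 := inner_self_eq_norm_sq u
  have hv : RCLike.re ⟪v, v⟫_ℂ = ‖v‖ ^ 2 := inner_self_eq_norm_sq v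
  simp only [RCLike.re_to_complex] at hu hv
  rw [hu, hv] at hre
  have hun : ‖u‖ = 0 := by nlinarith [sq_nonneg ‖u‖, sq_nonneg ‖v‖, norm_nonneg u, norm_nonneg v]
  have hvn : ‖v‖ = 0 := by nlinarith [sq_nonneg ‖u‖, sq_nonneg ‖v‖, norm_nonneg u, norm_nonneg v]
  exact ⟨norm_eq_zero.mp hun, norm_eq_zero.mp hvn⟩

/-- Abstract Kähler–Hodge setting: the inclusion `(ker ∂†, ∂̄) ↪ (V, ∂̄)` induces an
injection on cohomology: if `∂†α = 0` and `α = ∂̄β` for some `β`, then `α = ∂̄β'` for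
some `β'` with `∂†β' = 0`. -/
theorem kahler_hodge_inclusion_injective_dbar {V : Type*} [NormedAddCommGroup V]
    [InnerProductSpace ℂ V] (pd pbar pdDag pbarDag : V →ₗ[ℂ] V)
    (hpd_adj : ∀ x y : V, ⟪pd x, y⟫_ℂ = ⟪x, pdDag y⟫_ℂ)
    (hpbar_adj : ∀ x y : V, ⟪pbar x, y⟫_ℂ = ⟪x, pbarDag y⟫_ℂ)
    (hpd2 : ∀ x : V, pd (pd x) = 0)
    (hpbar2 : ∀ x : V, pbar (pbar x) = 0)
    (hanticomm : ∀ x : V, pd (pbar x) + pbar (pd x) = 0)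
    (hLaplacians : ∀ x : V,
      pbar (pbarDag x) + pbarDag (pbar x) = pd (pdDag x) + pdDag (pd x))
    (hHodge : ∀ x : V, ∃ h y : V,
      x = h + (pbar (pbarDag y) + pbarDag (pbar y)) ∧
      pbar (pbarDag h) + pbarDag (pbar h) = 0) :
    ∀ α : V, pdDag α = 0 → (∃ β : V, α = pbar β) →
      ∃ β' : V, pdDag β' = 0 ∧ α = pbar β' := by
  -- reversed adjoint identities
  have hrevd : ∀ x y : V, ⟪pdDag x, y⟫_ℂ = ⟪x, pd y⟫_ℂ := by
    intro x y
    rw [← inner_conj_symm, ← hpd_adj, inner_conj_symm]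
  have hrevbar : ∀ x y : V, ⟪pbarDag x, y⟫_ℂ = ⟪x, pbar y⟫_ℂ := by
    intro x y
    rw [← inner_conj_symm, ← hpbar_adj, inner_conj_symm]
  -- pdDag squares to zero
  have hpdDag2 : ∀ x : V, pdDag (pdDag x) = 0 := by
    intro x
    rw [← inner_self_eq_zero (𝕜 := ℂ)]
    calc ⟪pdDag (pdDag x), pdDag (pdDag x)⟫_ℂ
        = ⟪pdDag x, pd (pdDag (pdDag x))⟫_ℂ := hrevd _ _
      _ = ⟪x, pd (pd (pdDag (pdDag x)))⟫_ℂ := hrevd _ _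
      _ = 0 := by rw [hpd2]; exact inner_zero_right x
  -- harmonic elements are closed and coclosed (for pbar)
  have hharm : ∀ x : V, pbar (pbarDag x) + pbarDag (pbar x) = 0 →
      pbar x = 0 ∧ pbarDag x = 0 := by
    intro x hx
    apply kh_inner_self_add_eq_zero
    calc ⟪pbar x, pbar x⟫_ℂ + ⟪pbarDag x, pbarDag x⟫_ℂ
        = ⟪x, pbarDag (pbar x)⟫_ℂ + ⟪x, pbar (pbarDag x)⟫_ℂ := by
          rw [hpbar_adj, hrevbar]
      _ = ⟪x, pbar (pbarDag x) + pbarDag (pbar x)⟫_ℂ := by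
          rw [inner_add_right]; ring
      _ = 0 := by rw [hx]; exact inner_zero_right x
  -- daggers anticommute
  have hdaganti : ∀ x : V, pdDag (pbarDag x) + pbarDag (pdDag x) = 0 := by
    intro x
    rw [← inner_self_eq_zero (𝕜 := ℂ)]
    set s := pdDag (pbarDag x) + pbarDag (pdDag x) with hs
    calc ⟪s, s⟫_ℂ
        = ⟪pdDag (pbarDag x), s⟫_ℂ + ⟪pbarDag (pdDag x), s⟫_ℂ := inner_add_left _ _ _
      _ = ⟪x, pbar (pd s)⟫_ℂ + ⟪x, pd (pbar s)⟫_ℂ := by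
          rw [hrevd, hrevbar, hrevbar, hrevd]
      _ = ⟪x, pd (pbar s) + pbar (pd s)⟫_ℂ := by rw [inner_add_right]; ring
      _ = 0 := by rw [hanticomm]; exact inner_zero_right x
  -- main argument
  rintro α hαd ⟨β, hβ⟩
  obtain ⟨h, y, hdec, hharmh⟩ := hHodge β
  obtain ⟨hph, -⟩ := hharm h hharmh
  set z := pbar y with hz
  -- α = pbar (pbarDag z)
  have hα1 : α = pbar (pbarDag z) := by
    rw [hβ, hdec]
    simp only [map_add, hph, hpbar2, zero_add, add_zero, hz]
  -- pbarDag (pbar z) = 0 since pbar z = 0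
  have hpz : pbar z = 0 := hpbar2 y
  -- α equals the ∂-Laplacian of z
  have hα2 : α = pd (pdDag z) + pdDag (pd z) := by
    rw [hα1, ← hLaplacians, hpz, map_zero, add_zero]
  -- pdDag α = 0 forces pd (pdDag z) = 0
  have h3 : pdDag (pd (pdDag z)) = 0 := by
    have := congrArg pdDag hα2
    rw [hαd, map_add, hpdDag2, add_zero] at this
    exact this.symm
  have h4 : pd (pdDag z) = 0 := by
    rw [← inner_self_eq_zero (𝕜 := ℂ)]
    calc ⟪pd (pdDag z), pd (pdDag z)⟫_ℂ
        = ⟪pdDag z, pdDag (pd (pdDag z))⟫_ℂ := hpd_adj _ _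
      _ = 0 := by rw [h3]; exact inner_zero_right _
  -- pdDag z is harmonic
  have h5 : pbar (pbarDag (pdDag z)) + pbarDag (pbar (pdDag z)) = 0 := by
    rw [hLaplacians, hpdDag2, map_zero, zero_add, h4, map_zero]
  obtain ⟨-, h6⟩ := hharm (pdDag z) h5
  -- β' = pbarDag z works
  refine ⟨pbarDag z, ?_, hα1⟩
  have := hdaganti z
  rw [h6, add_zero] at this
  exact this
end

section
/- With notation as in the abstract Kähler–Hodge setting, the inclusion of complexes (ker ∂̄, ∂†) ↪ (V, ∂†) induces a surjection on cohomology: for every x ∈ V with ∂†x = 0 there exists x' ∈ V with ∂†x' = 0, ∂̄x' = 0, and x − x' ∈ range ∂†. -/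
/-!
A harmonic form `h` (one with `Δh = 0`) is killed by `∂̄`, and, since the two Laplacians agree,
also by `∂†`. Write a `∂†`-closed `x` as `h + Δy = h + ∂∂†y + ∂†∂y`. Applying `∂†` gives
`∂†∂∂†y = 0`, hence `‖∂∂†y‖² = ⟪∂†y, ∂†∂∂†y⟫ = 0`, so `x - h = ∂†(∂y)`.
-/

open scoped InnerProductSpace

section AdjointPair

variable {𝕜 V : Type*} [RCLike 𝕜] [NormedAddCommGroup V] [InnerProductSpace 𝕜 V]
  {A B : V →ₗ[𝕜] V}

theorem adjoint_apply_apply_eq_zero (hadj : ∀ x y : V, ⟪A x, y⟫_𝕜 = ⟪x, B y⟫_𝕜)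
    (hA : ∀ x : V, A (A x) = 0) (x : V) : B (B x) = 0 := by
  rw [← inner_self_eq_zero (𝕜 := 𝕜), ← hadj, ← hadj, hA, inner_zero_left]

theorem apply_eq_zero_of_adjoint_apply_eq_zero (hadj : ∀ x y : V, ⟪A x, y⟫_𝕜 = ⟪x, B y⟫_𝕜)
    {x : V} (hx : B (A x) = 0) : A x = 0 := by
  rw [← inner_self_eq_zero (𝕜 := 𝕜), hadj, hx, inner_zero_right]

theorem inner_laplacian_apply_self (hadj : ∀ x y : V, ⟪A x, y⟫_𝕜 = ⟪x, B y⟫_𝕜) (x : V) :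
    ⟪A (B x) + B (A x), x⟫_𝕜 = ((‖A x‖ ^ 2 + ‖B x‖ ^ 2 : ℝ) : 𝕜) := by
  have hBA : ⟪B (A x), x⟫_𝕜 = ⟪A x, A x⟫_𝕜 := by
    rw [← inner_conj_symm, ← hadj, inner_self_conj]
  rw [inner_add_left, hadj, hBA, inner_self_eq_norm_sq_to_K, inner_self_eq_norm_sq_to_K]
  push_cast
  ring

theorem apply_eq_zero_and_adjoint_apply_eq_zero_of_laplacian_eq_zero
    (hadj : ∀ x y : V, ⟪A x, y⟫_𝕜 = ⟪x, B y⟫_𝕜) {x : V} (hx : A (B x) + B (A x) = 0) :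
    A x = 0 ∧ B x = 0 := by
  have hnorms : ‖A x‖ ^ 2 + ‖B x‖ ^ 2 = 0 := by
    have := inner_laplacian_apply_self hadj x
    rwa [hx, inner_zero_left, eq_comm, RCLike.ofReal_eq_zero] at this
  rw [add_eq_zero_iff_of_nonneg (by positivity) (by positivity)] at hnorms
  exact ⟨norm_eq_zero.mp (pow_eq_zero_iff two_ne_zero |>.mp hnorms.1),
    norm_eq_zero.mp (pow_eq_zero_iff two_ne_zero |>.mp hnorms.2)⟩

end AdjointPair

theorem kahler_hodge_inclusion_surjective_pdag_general {V : Type*} [NormedAddCommGroup V]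
    [InnerProductSpace ℂ V] (pd pbar pdDag pbarDag : V →ₗ[ℂ] V)
    (hpd_adj : ∀ x y : V, ⟪pd x, y⟫_ℂ = ⟪x, pdDag y⟫_ℂ)
    (hpbar_adj : ∀ x y : V, ⟪pbar x, y⟫_ℂ = ⟪x, pbarDag y⟫_ℂ)
    (hpd2 : ∀ x : V, pd (pd x) = 0)
    (hLaplacians : ∀ x : V,
      pbar (pbarDag x) + pbarDag (pbar x) = pd (pdDag x) + pdDag (pd x))
    (hHodge : ∀ x : V, ∃ h y : V,
      x = h + (pbar (pbarDag y) + pbarDag (pbar y)) ∧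
      pbar (pbarDag h) + pbarDag (pbar h) = 0) :
    ∀ x : V, pdDag x = 0 →
      ∃ x' : V, pdDag x' = 0 ∧ pbar x' = 0 ∧ ∃ u : V, x - x' = pdDag u := by
  intro x hx
  obtain ⟨h, y, rfl, hharm⟩ := hHodge x
  obtain ⟨hpbar_h, -⟩ :=
    apply_eq_zero_and_adjoint_apply_eq_zero_of_laplacian_eq_zero hpbar_adj hharm
  obtain ⟨-, hpdDag_h⟩ :=
    apply_eq_zero_and_adjoint_apply_eq_zero_of_laplacian_eq_zero hpd_adj (hLaplacians h ▸ hharm)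
  have hpd_pdDag_y : pd (pdDag y) = 0 := by
    refine apply_eq_zero_of_adjoint_apply_eq_zero hpd_adj ?_
    simpa [hLaplacians y, hpdDag_h, adjoint_apply_apply_eq_zero hpd_adj hpd2] using hx
  refine ⟨h, hpdDag_h, hpbar_h, pd y, ?_⟩
  rw [hLaplacians y, hpd_pdDag_y, zero_add, add_sub_cancel_left]

/-- Abstract Kähler–Hodge setting: the inclusion `(ker ∂̄, ∂†) ↪ (V, ∂†)` induces a
surjection on cohomology: every `∂†`-closed `x` is `∂†`-cohomologous to some `x'` with
`∂†x' = 0` and `∂̄x' = 0`. -/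
theorem kahler_hodge_inclusion_surjective_pdag {V : Type*} [NormedAddCommGroup V]
    [InnerProductSpace ℂ V] (pd pbar pdDag pbarDag : V →ₗ[ℂ] V)
    (hpd_adj : ∀ x y : V, ⟪pd x, y⟫_ℂ = ⟪x, pdDag y⟫_ℂ)
    (hpbar_adj : ∀ x y : V, ⟪pbar x, y⟫_ℂ = ⟪x, pbarDag y⟫_ℂ)
    (hpd2 : ∀ x : V, pd (pd x) = 0)
    (hpbar2 : ∀ x : V, pbar (pbar x) = 0)
    (hanticomm : ∀ x : V, pd (pbar x) + pbar (pd x) = 0)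
    (hLaplacians : ∀ x : V,
      pbar (pbarDag x) + pbarDag (pbar x) = pd (pdDag x) + pdDag (pd x))
    (hHodge : ∀ x : V, ∃ h y : V,
      x = h + (pbar (pbarDag y) + pbarDag (pbar y)) ∧
      pbar (pbarDag h) + pbarDag (pbar h) = 0) :
    ∀ x : V, pdDag x = 0 →
      ∃ x' : V, pdDag x' = 0 ∧ pbar x' = 0 ∧ ∃ u : V, x - x' = pdDag u :=
  kahler_hodge_inclusion_surjective_pdag_general pd pbar pdDag pbarDag hpd_adj hpbar_adj hpd2
    hLaplacians hHodge
end

section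
/- With notation as in the abstract Kähler–Hodge setting, the inclusion of complexes (ker ∂̄, ∂†) ↪ (V, ∂†) induces an injection on cohomology: if α ∈ V satisfies ∂̄α = 0 and α = ∂†β for some β ∈ V, then there exists β' ∈ V with ∂̄β' = 0 and α = ∂†β'. -/
open scoped InnerProductSpace

/-- If `D (Ddag h) + Ddag (D h) = 0` for an adjoint pair, then `D h = 0` and `Ddag h = 0`. -/
lemma kahler_harm_aux {V : Type*} [NormedAddCommGroup V] [InnerProductSpace ℂ V]
    (D Ddag : V →ₗ[ℂ] V) (hadj : ∀ x y : V, ⟪D x, y⟫_ℂ = ⟪x, Ddag y⟫_ℂ)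
    (h : V) (hh : D (Ddag h) + Ddag (D h) = 0) : D h = 0 ∧ Ddag h = 0 := by
  have hadj' : ∀ x y : V, ⟪Ddag x, y⟫_ℂ = ⟪x, D y⟫_ℂ := by
    intro x y
    rw [← inner_conj_symm, ← hadj, inner_conj_symm]
  have e : ⟪Ddag h, Ddag h⟫_ℂ + ⟪D h, D h⟫_ℂ = 0 := by
    rw [← hadj, ← hadj', ← inner_add_left, hh, inner_zero_left]
  rw [inner_self_eq_norm_sq_to_K, inner_self_eq_norm_sq_to_K] at e
  have e' : (‖Ddag h‖ ^ 2 + ‖D h‖ ^ 2 : ℝ) = 0 := by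
    have : ((‖Ddag h‖ ^ 2 + ‖D h‖ ^ 2 : ℝ) : ℂ) = 0 := by push_cast; exact e
    exact Complex.ofReal_eq_zero.mp this
  constructor
  · have : ‖D h‖ = 0 := by nlinarith [sq_nonneg ‖Ddag h‖, sq_nonneg ‖D h‖, norm_nonneg (D h), norm_nonneg (Ddag h)]
    simpa using this
  · have : ‖Ddag h‖ = 0 := by nlinarith [sq_nonneg ‖Ddag h‖, sq_nonneg ‖D h‖, norm_nonneg (D h), norm_nonneg (Ddag h)]
    simpa using this

/-- Abstract Kähler–Hodge setting: the inclusion `(ker ∂̄, ∂†) ↪ (V, ∂†)` induces an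
injection on cohomology: if `∂̄α = 0` and `α = ∂†β` for some `β`, then `α = ∂†β'` for
some `β'` with `∂̄β' = 0`. -/
theorem kahler_hodge_inclusion_injective_pdag {V : Type*} [NormedAddCommGroup V]
    [InnerProductSpace ℂ V] (pd pbar pdDag pbarDag : V →ₗ[ℂ] V)
    (hpd_adj : ∀ x y : V, ⟪pd x, y⟫_ℂ = ⟪x, pdDag y⟫_ℂ)
    (hpbar_adj : ∀ x y : V, ⟪pbar x, y⟫_ℂ = ⟪x, pbarDag y⟫_ℂ)
    (hpd2 : ∀ x : V, pd (pd x) = 0)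
    (hpbar2 : ∀ x : V, pbar (pbar x) = 0)
    (hanticomm : ∀ x : V, pd (pbar x) + pbar (pd x) = 0)
    (hLaplacians : ∀ x : V,
      pbar (pbarDag x) + pbarDag (pbar x) = pd (pdDag x) + pdDag (pd x))
    (hHodge : ∀ x : V, ∃ h y : V,
      x = h + (pbar (pbarDag y) + pbarDag (pbar y)) ∧
      pbar (pbarDag h) + pbarDag (pbar h) = 0) :
    ∀ α : V, pbar α = 0 → (∃ β : V, α = pdDag β) →
      ∃ β' : V, pbar β' = 0 ∧ α = pdDag β' := by
  intro α hα hex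
  obtain ⟨β, hβ⟩ := hex
  -- reversed adjoints
  have hpd_adj' : ∀ x y : V, ⟪pdDag x, y⟫_ℂ = ⟪x, pd y⟫_ℂ := by
    intro x y; rw [← inner_conj_symm, ← hpd_adj, inner_conj_symm]
  have hpbar_adj' : ∀ x y : V, ⟪pbarDag x, y⟫_ℂ = ⟪x, pbar y⟫_ℂ := by
    intro x y; rw [← inner_conj_symm, ← hpbar_adj, inner_conj_symm]
  -- pdDag squares to zero
  have hpdDag2 : ∀ x : V, pdDag (pdDag x) = 0 := by
    intro x
    rw [← inner_self_eq_zero (𝕜 := ℂ)]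
    rw [← hpd_adj, ← hpd_adj, hpd2, inner_zero_left]
  -- Hodge decomposition of α
  obtain ⟨h, y, hdec, hharmh⟩ := hHodge α
  -- h is fully harmonic
  obtain ⟨hpbarh, hpbarDagh⟩ := kahler_harm_aux pbar pbarDag hpbar_adj h hharmh
  have hharmh' : pd (pdDag h) + pdDag (pd h) = 0 := by rw [← hLaplacians]; exact hharmh
  obtain ⟨hpdh, hpdDagh⟩ := kahler_harm_aux pd pdDag hpd_adj h hharmh'
  -- h = 0
  have hh0 : h = 0 := by
    rw [← inner_self_eq_zero (𝕜 := ℂ)]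
    have h1 : ⟪h, α⟫_ℂ = 0 := by
      rw [hβ, ← hpd_adj, hpdh, inner_zero_left]
    have h2 : ⟪h, pbar (pbarDag y) + pbarDag (pbar y)⟫_ℂ = 0 := by
      rw [inner_add_right, ← hpbar_adj', hpbarDagh, inner_zero_left,
        ← hpbar_adj, hpbarh, inner_zero_left, add_zero]
    have := h1
    rw [hdec, inner_add_right, h2, add_zero] at this
    exact this
  have hαΔ : α = pbar (pbarDag y) + pbarDag (pbar y) := by
    rw [hdec, hh0, zero_add]
  -- pbar y is harmonic: Δ(pbar y) = pbar α = 0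
  have hΔpbary : pbar (pbarDag (pbar y)) + pbarDag (pbar (pbar y)) = 0 := by
    have : pbar α = pbar (pbarDag (pbar y)) := by
      rw [hαΔ, map_add, hpbar2, zero_add]
    rw [hpbar2, map_zero, add_zero, ← this, hα]
  have hΔpbary' : pd (pdDag (pbar y)) + pdDag (pd (pbar y)) = 0 := by
    rw [← hLaplacians]; exact hΔpbary
  obtain ⟨hpdpbary, _⟩ := kahler_harm_aux pd pdDag hpd_adj (pbar y) hΔpbary'
  -- α = Δ_∂ y
  have hαΔd : α = pd (pdDag y) + pdDag (pd y) := by rw [hαΔ, hLaplacians]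
  -- pd (pdDag y) = 0
  have hu0 : pd (pdDag y) = 0 := by
    rw [← inner_self_eq_zero (𝕜 := ℂ)]
    have e1 : ⟪pd (pdDag y), α⟫_ℂ = 0 := by
      rw [hβ, hpd_adj, hpdDag2, inner_zero_right]
    have e2 : ⟪pd (pdDag y), pdDag (pd y)⟫_ℂ = 0 := by
      rw [hpd_adj, hpdDag2, inner_zero_right]
    rw [hαΔd, inner_add_right, e2, add_zero] at e1
    exact e1
  -- conclude with β' = pd y
  refine ⟨pd y, ?_, ?_⟩
  · have := hanticomm y
    rw [hpdpbary, zero_add] at this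
    exact this
  · rw [hαΔd, hu0, zero_add]
end
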